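/- Let k ≥ 2 and m = k² + 2k − 2, with blocks as follows: for i ∈ [k], block i consists of positions {(i−1)k + j : j ∈ [k]}, and block k+1 consists of the remaining 2k−2 positions. For i ∈ [k] and each subset X of block k+1 with |X| = k−2, let s_{i,X} be the binary string of length m with ones exactly at all positions of block i and at the positions of X. Suppose s is a binary string of length m with ones(s) = k such that hamm(s, s_{i,X}) ≤ 3k−3 for every i ∈ [k] and every such X. Then for every i ∈ [k], s has exactly one 1 in block i, and s has no ones in block k+1. -/
import Mathlib


/-- The set of positions `[m]` for `m = k² + 2k - 2`, partitioned into blocks: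
for each `i ∈ [k]`, block `i` consists of the positions `(i, j)` for `j ∈ [k]`,
and block `k+1` consists of the remaining `2k - 2` positions. -/
abbrev Pos (k : ℕ) := (Fin k × Fin k) ⊕ Fin (2 * k - 2)

/-- Hamming distance between two binary strings over a finite set of positions. -/
def hamm {I : Type*} [Fintype I] (x y : I → Bool) : ℕ :=
  (Finset.univ.filter (fun a => x a ≠ y a)).card

/-- Number of ones in a binary string over a finite set of positions. -/
def ones {I : Type*} [Fintype I] (s : I → Bool) : ℕ :=
  (Finset.univ.filter (fun a => s a = true)).card

/-- The row string `s_{i,X}`: ones exactly at all positions of block `i` and at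
the positions of `X ⊆` block `k+1`. -/
def rowStr {k : ℕ} (i : Fin k) (X : Finset (Fin (2 * k - 2))) : Pos k → Bool
  | Sum.inl (i', _) => decide (i' = i)
  | Sum.inr t => decide (t ∈ X)

theorem stmt_6 (k : ℕ) (hk : 2 ≤ k) (s : Pos k → Bool)
    (hones : ones s = k)
    (hrow : ∀ (i : Fin k) (X : Finset (Fin (2 * k - 2))), X.card = k - 2 →
      hamm s (rowStr i X) ≤ 3 * k - 3) :
    (∀ i : Fin k,
        (Finset.univ.filter (fun j : Fin k => s (Sum.inl (i, j)) = true)).card = 1)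
      ∧ (∀ t : Fin (2 * k - 2), s (Sum.inr t) = false) := by
  classical
  set A : Fin k → Finset (Fin k) :=
    fun i => Finset.univ.filter (fun j : Fin k => s (Sum.inl (i, j)) = true) with hA
  set B : Finset (Fin (2 * k - 2)) :=
    Finset.univ.filter (fun t => s (Sum.inr t) = true) with hB
  -- decomposition of ones
  have hsum : (∑ i : Fin k, (A i).card) + B.card = k := by
    have hdec : ones s = (∑ i : Fin k, (A i).card) + B.card := by
      rw [ones, Finset.card_filter, Fintype.sum_sum_type, Fintype.sum_prod_type]
      simp only [hA, hB, Finset.card_filter]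
    omega
  have hBle : B.card ≤ k := by omega
  -- key: each block has a one
  have key : ∀ i : Fin k, (A i).Nonempty := by
    intro i
    by_contra hne
    have hAe : A i = ∅ := Finset.not_nonempty_iff_eq_empty.mp hne
    have hcompl : k - 2 ≤ Bᶜ.card := by
      rw [Finset.card_compl]
      simp only [Fintype.card_fin]
      omega
    obtain ⟨X, hXsub, hXcard⟩ := Finset.exists_subset_card_eq hcompl
    have hle := hrow i X hXcard
    -- build a large disagreement set
    set S : Finset (Pos k) := Finset.univ.filter (fun a => s a = true) with hS
    set blockI : Finset (Pos k) :=
      Finset.univ.image (fun j : Fin k => (Sum.inl (i, j) : Pos k)) with hBI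
    set X' : Finset (Pos k) := X.image Sum.inr with hX'
    have hsfalseI : ∀ j : Fin k, s (Sum.inl (i, j)) = false := by
      intro j
      have : j ∉ A i := by rw [hAe]; exact Finset.notMem_empty j
      simp only [hA, Finset.mem_filter, Finset.mem_univ, true_and] at this
      simpa using this
    have hsfalseX : ∀ t ∈ X, s (Sum.inr t) = false := by
      intro t ht
      have := hXsub ht
      simp only [Finset.mem_compl, hB, Finset.mem_filter, Finset.mem_univ, true_and] at this
      simpa using this
    have hsub : S ∪ blockI ∪ X' ⊆
        Finset.univ.filter (fun a => s a ≠ rowStr i X a) := by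
      intro a ha
      simp only [Finset.mem_filter, Finset.mem_univ, true_and]
      simp only [Finset.mem_union, hS, hBI, hX', Finset.mem_filter, Finset.mem_univ,
        true_and, Finset.mem_image] at ha
      rcases ha with (hsa | ⟨j, _, rfl⟩) | ⟨t, htX, rfl⟩
      · rw [hsa]
        rcases a with ⟨i', j⟩ | t
        · have hne' : i' ≠ i := by
            intro h; subst h
            rw [hsfalseI j] at hsa; exact absurd hsa (by simp)
          simp [rowStr, hne']
        · have : t ∉ X := by
            intro htX
            rw [hsfalseX t htX] at hsa; exact absurd hsa (by simp)
          simp [rowStr, this]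
      · rw [hsfalseI j]; simp [rowStr]
      · rw [hsfalseX t htX]; simp [rowStr, htX]
    have hd1 : Disjoint blockI X' := by
      simp only [Finset.disjoint_left, hBI, hX', Finset.mem_image]
      rintro a ⟨j, _, rfl⟩ ⟨t, _, h⟩
      exact absurd h (by simp)
    have hd2 : Disjoint S (blockI ∪ X') := by
      simp only [Finset.disjoint_left, hS, Finset.mem_filter, Finset.mem_univ, true_and]
      rintro a hsa ha
      simp only [Finset.mem_union, hBI, hX', Finset.mem_image] at ha
      rcases ha with ⟨j, _, rfl⟩ | ⟨t, htX, rfl⟩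
      · rw [hsfalseI j] at hsa; exact absurd hsa (by simp)
      · rw [hsfalseX t htX] at hsa; exact absurd hsa (by simp)
    have hScard : S.card = k := hones
    have hBIcard : blockI.card = k := by
      rw [hBI, Finset.card_image_of_injective _ (by intro a b h; simpa using h)]
      simp
    have hX'card : X'.card = k - 2 := by
      rw [hX', Finset.card_image_of_injective _ Sum.inr_injective, hXcard]
    have hcard : (S ∪ blockI ∪ X').card = k + k + (k - 2) := by
      rw [Finset.union_assoc, Finset.card_union_of_disjoint hd2,
        Finset.card_union_of_disjoint hd1, hScard, hBIcard, hX'card]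
      omega
    have hge : k + k + (k - 2) ≤ hamm s (rowStr i X) := by
      rw [hamm, ← hcard]
      exact Finset.card_le_card hsub
    omega
  -- counting
  have h1 : ∀ i : Fin k, 1 ≤ (A i).card := fun i => Finset.card_pos.mpr (key i)
  have hge : k ≤ ∑ i : Fin k, (A i).card := by
    calc k = ∑ _i : Fin k, 1 := by simp
    _ ≤ ∑ i : Fin k, (A i).card := Finset.sum_le_sum (fun i _ => h1 i)
  have hB0 : B.card = 0 := by omega
  have hsum' : ∑ i : Fin k, (A i).card = ∑ _i : Fin k, 1 := by simp; omega
  have heach : ∀ i ∈ Finset.univ, (A i).card = 1 := by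
    intro i hi
    exact ((Finset.sum_eq_sum_iff_of_le (fun i _ => h1 i)).mp hsum'.symm i hi).symm
  constructor
  · intro i; exact heach i (Finset.mem_univ i)
  · intro t
    have : t ∉ B := by
      rw [Finset.card_eq_zero.mp hB0]; exact Finset.notMem_empty t
    simp only [hB, Finset.mem_filter, Finset.mem_univ, true_and] at this
    simpa using this
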